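/- arXiv:1601.05702 — 5 statements merged into one kernel-verified Lean document; each statement's English description precedes it below -/
import Mathlib

section
/- Let γ, z ∈ ℝ satisfy 1 + γz > 0 and set D(γ, z) = ∫₀^z t/(1 + γt)² dt. Then D(γ, z) ≥ 0 and D(γ, z) ≤ z²/(1 + γz). Moreover, if γz > 0 then also D(γ, z) ≤ z²/2 and, when γ ≠ 0, D(γ, z) ≤ γ^{−1} log(1 + γz) · z/(1 + γz), which in turn is bounded above both by z²/(1 + γz) and by γ^{−2} log(1 + γz). -/
/-- `D(γ, z) = ∫₀^z t / (1 + γ t)² dt`, the partial derivative `∂_γ log u_γ(z)`. -/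
noncomputable def gevDGamma (γ z : ℝ) : ℝ := ∫ t in (0:ℝ)..z, t / (1 + γ * t) ^ 2

/-!
The substitution `t = z s` gives `D(γ, z) = z² D(γz, 1)`, so every bound reduces to a bound on
`D(w, 1)` with `w = γz > -1`. For `w ≠ 0` the antiderivative gives
`D(w, 1) = (log (1 + w) - w / (1 + w)) / w²`, and the bounds by `(1 + w)⁻¹` and by
`log (1 + w) / (w (1 + w))` both come down to `log (1 + w) ≤ w`. The bound `1/2` for `w ≥ 0`
compares the integrand with `s`.
-/

open Real Set intervalIntegral

theorem gevDGamma_eq_sq_mul (γ z : ℝ) : gevDGamma γ z = z ^ 2 * gevDGamma (γ * z) 1 := by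
  have hscale := smul_integral_comp_mul_left (a := 0) (b := 1) (fun t => t / (1 + γ * t) ^ 2) z
  simp only [mul_zero, mul_one, smul_eq_mul] at hscale
  rw [gevDGamma, ← hscale, gevDGamma, ← integral_const_mul, ← integral_const_mul]
  congr 1
  ext s
  ring

section UnitInterval

variable {w : ℝ}

lemma one_add_mul_pos_of_mem_Icc (hw : 0 < 1 + w) {s : ℝ} (hs : s ∈ Icc (0:ℝ) 1) :
    0 < 1 + w * s := by
  obtain ⟨hs0, hs1⟩ := hs
  rcases le_total 0 w with hw0 | hw0 <;> nlinarith

lemma intervalIntegrable_div_one_add_mul_sq (hw : 0 < 1 + w) :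
    IntervalIntegrable (fun s => s / (1 + w * s) ^ 2) MeasureTheory.volume 0 1 := by
  refine ContinuousOn.intervalIntegrable_of_Icc zero_le_one ?_
  exact continuousOn_id.div (by fun_prop) fun s hs =>
    (pow_pos (one_add_mul_pos_of_mem_Icc hw hs) 2).ne'

theorem gevDGamma_zero_one : gevDGamma 0 1 = 1 / 2 := by
  norm_num [gevDGamma, integral_id]

theorem gevDGamma_one_eq (hw : 0 < 1 + w) (hw0 : w ≠ 0) :
    gevDGamma w 1 = (log (1 + w) - w / (1 + w)) / w ^ 2 := by
  have hderiv : ∀ s ∈ uIcc (0:ℝ) 1, HasDerivAt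
      (fun s => (log (1 + w * s) - w * s / (1 + w * s)) / w ^ 2) (s / (1 + w * s) ^ 2) s := by
    intro s hs
    rw [uIcc_of_le zero_le_one] at hs
    have hpos := one_add_mul_pos_of_mem_Icc hw hs
    have hlin : HasDerivAt (fun s => 1 + w * s) w s := by
      simpa using ((hasDerivAt_id s).const_mul w).const_add 1
    have hmul : HasDerivAt (fun s => w * s) w s := by
      simpa using (hasDerivAt_id s).const_mul w
    refine (((hlin.log hpos.ne').sub (hmul.div hlin hpos.ne')).div_const (w ^ 2)).congr_deriv ?_
    field_simp
    ring
  rw [gevDGamma, integral_eq_sub_of_hasDerivAt hderiv (intervalIntegrable_div_one_add_mul_sq hw)]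
  simp

theorem gevDGamma_one_nonneg : 0 ≤ gevDGamma w 1 :=
  integral_nonneg zero_le_one fun _ hs => div_nonneg hs.1 (sq_nonneg _)

theorem gevDGamma_one_le_inv (hw : 0 < 1 + w) : gevDGamma w 1 ≤ (1 + w)⁻¹ := by
  rcases eq_or_ne w 0 with rfl | hw0
  · norm_num [gevDGamma_zero_one]
  rw [gevDGamma_one_eq hw hw0, div_le_iff₀ (by positivity)]
  have hlog := log_le_sub_one_of_pos hw
  have hsplit : w / (1 + w) + (1 + w)⁻¹ * w ^ 2 = w := by field_simp
  linarith

theorem gevDGamma_one_le_half (hw : 0 ≤ w) : gevDGamma w 1 ≤ 1 / 2 := by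
  calc gevDGamma w 1 ≤ ∫ s in (0:ℝ)..1, s :=
        integral_mono_on zero_le_one (intervalIntegrable_div_one_add_mul_sq (by linarith))
          intervalIntegrable_id
          fun s hs => div_le_self hs.1 (one_le_pow₀ (by nlinarith [hs.1]))
    _ = 1 / 2 := by norm_num [integral_id]

theorem gevDGamma_one_le_log_div (hw : 0 < 1 + w) (hw0 : w ≠ 0) :
    gevDGamma w 1 ≤ log (1 + w) / (w * (1 + w)) := by
  rw [gevDGamma_one_eq hw hw0, div_le_iff₀ (by positivity)]
  have hrw : log (1 + w) / (w * (1 + w)) * w ^ 2 = log (1 + w) - log (1 + w) / (1 + w) := by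
    field_simp
    ring
  rw [hrw]
  gcongr
  linarith [log_le_sub_one_of_pos hw]

lemma log_one_add_div_le_inv (hw : 0 < w) : log (1 + w) / (w * (1 + w)) ≤ (1 + w)⁻¹ := by
  calc log (1 + w) / (w * (1 + w)) ≤ w / (w * (1 + w)) := by
        gcongr
        linarith [log_le_sub_one_of_pos (by linarith : 0 < 1 + w)]
    _ = (1 + w)⁻¹ := by field_simp

lemma log_one_add_div_le_div_sq (hw : 0 < w) :
    log (1 + w) / (w * (1 + w)) ≤ log (1 + w) / w ^ 2 := by
  have hlog : 0 ≤ log (1 + w) := log_nonneg (by linarith)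
  gcongr
  nlinarith

end UnitInterval

/-- Bounds on `D(γ, z) = ∫₀^z t/(1 + γt)² dt` for `1 + γz > 0`:
`0 ≤ D(γ, z)`, `D(γ, z) ≤ z²/(1 + γz)`, and when `γz > 0` also `D(γ, z) ≤ z²/2` and
(for `γ ≠ 0`) `D(γ, z) ≤ γ⁻¹ log(1 + γz) · z/(1 + γz)`, the latter expression being
bounded above both by `z²/(1 + γz)` and by `γ⁻² log(1 + γz)`. -/
theorem gevDGamma_bounds (γ z : ℝ) (h : 0 < 1 + γ * z) :
    0 ≤ gevDGamma γ z ∧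
    gevDGamma γ z ≤ z ^ 2 / (1 + γ * z) ∧
    (0 < γ * z →
      gevDGamma γ z ≤ z ^ 2 / 2 ∧
      (γ ≠ 0 →
        gevDGamma γ z ≤ γ⁻¹ * Real.log (1 + γ * z) * (z / (1 + γ * z)) ∧
        γ⁻¹ * Real.log (1 + γ * z) * (z / (1 + γ * z)) ≤ z ^ 2 / (1 + γ * z) ∧
        γ⁻¹ * Real.log (1 + γ * z) * (z / (1 + γ * z)) ≤ γ⁻¹ ^ 2 * Real.log (1 + γ * z))) := by
  have hsq : 0 ≤ z ^ 2 := sq_nonneg z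
  rw [gevDGamma_eq_sq_mul, div_eq_mul_inv (z ^ 2)]
  refine ⟨mul_nonneg hsq gevDGamma_one_nonneg,
    mul_le_mul_of_nonneg_left (gevDGamma_one_le_inv h) hsq, fun hpos => ⟨?_, fun hγ => ?_⟩⟩
  · simpa [div_eq_mul_inv] using
      mul_le_mul_of_nonneg_left (gevDGamma_one_le_half hpos.le) hsq
  have hz : z ≠ 0 := by rintro rfl; simp at hpos
  have hmid : γ⁻¹ * log (1 + γ * z) * (z / (1 + γ * z))
      = z ^ 2 * (log (1 + γ * z) / (γ * z * (1 + γ * z))) := by field_simp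
  have hright : γ⁻¹ ^ 2 * log (1 + γ * z) = z ^ 2 * (log (1 + γ * z) / (γ * z) ^ 2) := by
    field_simp
  rw [hmid, hright]
  exact ⟨mul_le_mul_of_nonneg_left (gevDGamma_one_le_log_div h hpos.ne') hsq,
    mul_le_mul_of_nonneg_left (log_one_add_div_le_inv hpos) hsq,
    mul_le_mul_of_nonneg_left (log_one_add_div_le_div_sq hpos) hsq⟩
end

section
/- Let θ = (γ, μ, σ) with σ > 0 and let x ∈ ℝ satisfy 1 + γz > 0, where z = (x − μ)/σ and u = u_γ(z). Then the μ-score of the GEV log-density, ∂_μ ℓ_θ(x) = (γ + 1 − u)/(σ(1 + γz)), satisfies |∂_μ ℓ_θ(x)| ≤ σ^{−1}(1 + |γ|) u^{1+γ} if z ≤ 0, and |∂_μ ℓ_θ(x)| ≤ σ^{−1}(1 + |γ|) u^{γ} if z ≥ 0. -/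
/-- `u_γ(z)` for the GEV family: `(1 + γz)^(−1/γ)` for `γ ≠ 0` and `e^(−z)` for `γ = 0`. -/
noncomputable def gevU (γ z : ℝ) : ℝ :=
  if γ = 0 then Real.exp (-z) else (1 + γ * z) ^ (-γ⁻¹)

/-- The μ-score of the GEV log-density: `∂_μ ℓ_θ(x) = (γ + 1 − u)/(σ(1 + γz))`. -/
noncomputable def gevScoreMu (γ μ σ : ℝ) (x : ℝ) : ℝ :=
  (γ + 1 - gevU γ ((x - μ) / σ)) / (σ * (1 + γ * ((x - μ) / σ)))

/-- **Bound on the μ-score of the GEV log-density**: for `σ > 0` and `1 + γz > 0`, where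
`z = (x − μ)/σ` and `u = u_γ(z)`, one has `|∂_μ ℓ_θ(x)| ≤ σ⁻¹ (1 + |γ|) u^(1+γ)` if
`z ≤ 0`, and `|∂_μ ℓ_θ(x)| ≤ σ⁻¹ (1 + |γ|) u^γ` if `z ≥ 0`. -/
theorem gevScoreMu_bound (γ μ σ : ℝ) (hσ : 0 < σ) (x : ℝ)
    (h : 0 < 1 + γ * ((x - μ) / σ)) :
    ((x - μ) / σ ≤ 0 →
      |gevScoreMu γ μ σ x| ≤ σ⁻¹ * (1 + |γ|) * gevU γ ((x - μ) / σ) ^ (1 + γ)) ∧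
    (0 ≤ (x - μ) / σ →
      |gevScoreMu γ μ σ x| ≤ σ⁻¹ * (1 + |γ|) * gevU γ ((x - μ) / σ) ^ γ) := by
  set z := (x - μ) / σ with hz
  set u := gevU γ z with hu
  have hA : 0 < 1 + γ * z := h
  have hupos : 0 < u := by
    rw [hu, gevU]; split
    · exact Real.exp_pos _
    · exact Real.rpow_pos_of_pos hA _
  have huγ : u ^ γ = (1 + γ * z)⁻¹ := by
    rw [hu, gevU]; split_ifs with h0
    · simp [h0]
    · rw [← Real.rpow_mul hA.le]
      rw [show -γ⁻¹ * γ = -1 by field_simp]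
      exact Real.rpow_neg_one _
  have hscore : |gevScoreMu γ μ σ x| = |γ + 1 - u| * (σ * (1 + γ * z))⁻¹ := by
    rw [gevScoreMu, abs_div, abs_of_pos (mul_pos hσ hA)]
    rw [div_eq_mul_inv]
  constructor
  · intro hzneg
    have hu1 : 1 ≤ u := by
      rw [hu, gevU]; split_ifs with h0
      · exact Real.one_le_exp (by linarith)
      · rcases lt_or_gt_of_ne h0 with hγ | hγ
        · have hA1 : 1 ≤ 1 + γ * z := by nlinarith
          apply Real.one_le_rpow hA1 (neg_nonneg.mpr (inv_nonpos.mpr hγ.le))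
        · have hA1 : 1 + γ * z ≤ 1 := by nlinarith
          apply Real.one_le_rpow_of_pos_of_le_one_of_nonpos hA hA1
          simp [le_of_lt (inv_pos.mpr hγ)]
    have key : |γ + 1 - u| ≤ (1 + |γ|) * u := by
      rw [abs_le]
      constructor
      · nlinarith [le_abs_self γ, neg_abs_le γ, abs_nonneg γ]
      · nlinarith [le_abs_self γ, neg_abs_le γ, abs_nonneg γ]
    have hpow : u ^ (1 + γ) = u * (1 + γ * z)⁻¹ := by
      rw [Real.rpow_add hupos, Real.rpow_one, huγ]
    rw [hscore, hpow]
    calc |γ + 1 - u| * (σ * (1 + γ * z))⁻¹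
        ≤ (1 + |γ|) * u * (σ * (1 + γ * z))⁻¹ := by
          apply mul_le_mul_of_nonneg_right key (by positivity)
      _ = σ⁻¹ * (1 + |γ|) * (u * (1 + γ * z)⁻¹) := by
          rw [mul_inv]; ring
  · intro hzpos
    have hu1 : u ≤ 1 := by
      rw [hu, gevU]; split_ifs with h0
      · exact Real.exp_le_one_iff.mpr (by linarith)
      · rcases lt_or_gt_of_ne h0 with hγ | hγ
        · have hA1 : 1 + γ * z ≤ 1 := by nlinarith
          exact Real.rpow_le_one hA.le hA1 (neg_nonneg.mpr (inv_nonpos.mpr hγ.le))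
        · have hA1 : 1 ≤ 1 + γ * z := by nlinarith
          apply Real.rpow_le_one_of_one_le_of_nonpos hA1
          simp [le_of_lt (inv_pos.mpr hγ)]
    have key : |γ + 1 - u| ≤ 1 + |γ| := by
      rw [abs_le]
      constructor
      · nlinarith [le_abs_self γ, neg_abs_le γ, abs_nonneg γ]
      · nlinarith [le_abs_self γ, neg_abs_le γ, abs_nonneg γ]
    rw [hscore, huγ]
    calc |γ + 1 - u| * (σ * (1 + γ * z))⁻¹
        ≤ (1 + |γ|) * (σ * (1 + γ * z))⁻¹ := by
          apply mul_le_mul_of_nonneg_right key (by positivity)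
      _ = σ⁻¹ * (1 + |γ|) * (1 + γ * z)⁻¹ := by
          rw [mul_inv]; ring
end

section
/- Let θ = (γ, μ, σ) with σ > 0 and let x ∈ ℝ satisfy 1 + γz > 0, where z = (x − μ)/σ and u = u_γ(z). Then the σ-score of the GEV log-density, ∂_σ ℓ_θ(x) = ((1 − u)z − 1)/(σ(1 + γz)), satisfies |∂_σ ℓ_θ(x)| ≤ (z + 1)/(σ(1 + γz)) if z ≥ 0, and |∂_σ ℓ_θ(x)| ≤ σ^{−1}(1 + u log u) u^{max(γ, 0)} if z ≤ 0. -/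
/-- The σ-score of the GEV log-density: `∂_σ ℓ_θ(x) = ((1 − u)z − 1)/(σ(1 + γz))`. -/
noncomputable def gevScoreSigma (γ μ σ : ℝ) (x : ℝ) : ℝ :=
  ((1 - gevU γ ((x - μ) / σ)) * ((x - μ) / σ) - 1) / (σ * (1 + γ * ((x - μ) / σ)))

lemma gevU_pos {γ z : ℝ} (h : 0 < 1 + γ * z) : 0 < gevU γ z := by
  unfold gevU
  split
  · exact Real.exp_pos _
  · exact Real.rpow_pos_of_pos h _

lemma gevU_rpow {γ z : ℝ} (hγ : γ ≠ 0) (h : 0 < 1 + γ * z) :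
    gevU γ z ^ γ = (1 + γ * z)⁻¹ := by
  unfold gevU
  rw [if_neg hγ, ← Real.rpow_mul h.le, show -γ⁻¹ * γ = -1 by field_simp,
    Real.rpow_neg_one]

lemma gevU_log {γ z : ℝ} (hγ : γ ≠ 0) (h : 0 < 1 + γ * z) :
    Real.log (gevU γ z) = -γ⁻¹ * Real.log (1 + γ * z) := by
  unfold gevU
  rw [if_neg hγ, Real.log_rpow h]

lemma one_le_gevU {γ z : ℝ} (h : 0 < 1 + γ * z) (hz : z ≤ 0) : 1 ≤ gevU γ z := by
  unfold gevU
  split_ifs with hγ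
  · exact Real.one_le_exp (by linarith)
  · rcases lt_or_gt_of_ne hγ with hγ' | hγ'
    · exact Real.one_le_rpow (by nlinarith)
        (le_of_lt (by rw [← inv_neg]; exact inv_pos.mpr (by linarith)))
    · exact Real.one_le_rpow_of_pos_of_le_one_of_nonpos h (by nlinarith)
        (by simp [inv_nonneg.mpr hγ'.le])

lemma gevU_le_one {γ z : ℝ} (h : 0 < 1 + γ * z) (hz : 0 ≤ z) : gevU γ z ≤ 1 := by
  unfold gevU
  split_ifs with hγ
  · exact Real.exp_le_one_iff.mpr (by linarith)
  · rcases lt_or_gt_of_ne hγ with hγ' | hγ'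
    · exact Real.rpow_le_one h.le (by nlinarith)
        (le_of_lt (by rw [← inv_neg]; exact inv_pos.mpr (by linarith)))
    · exact Real.rpow_le_one_of_one_le_of_nonpos (by nlinarith)
        (by simp [inv_nonneg.mpr hγ'.le])

lemma gev_inv_le {γ z : ℝ} (h : 0 < 1 + γ * z) (hz : z ≤ 0) :
    (1 + γ * z)⁻¹ ≤ gevU γ z ^ (max γ 0) := by
  rcases eq_or_ne γ 0 with hγ | hγ
  · simp [hγ]
  · rw [← gevU_rpow hγ h]
    exact Real.rpow_le_rpow_of_exponent_le (one_le_gevU h hz) (le_max_left _ _)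

lemma gev_key {γ z : ℝ} (h : 0 < 1 + γ * z) (hz : z ≤ 0) :
    -z / (1 + γ * z) ≤ gevU γ z ^ (max γ 0) * Real.log (gevU γ z) := by
  rcases eq_or_ne γ 0 with hγ | hγ
  · subst hγ
    simp [gevU, Real.log_exp]
  · have hlog : Real.log (1 + γ * z) ≤ γ * z := by
      have := Real.log_le_sub_one_of_pos h; linarith
    have hlog2 : 1 - (1 + γ * z)⁻¹ ≤ Real.log (1 + γ * z) := by
      have := Real.log_le_sub_one_of_pos (inv_pos.mpr h)
      rw [Real.log_inv] at this; linarith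
    rw [gevU_log hγ h, div_le_iff₀ h]
    rcases lt_or_gt_of_ne hγ with hγ' | hγ'
    · rw [max_eq_right hγ'.le, Real.rpow_zero, one_mul]
      have hp : (0:ℝ) < -γ⁻¹ := by rw [← inv_neg]; exact inv_pos.mpr (by linarith)
      have hstep : γ * z ≤ Real.log (1 + γ * z) * (1 + γ * z) := by
        nlinarith [mul_le_mul_of_nonneg_right hlog2 h.le,
          mul_inv_cancel₀ (ne_of_gt h)]
      have h5 : -γ⁻¹ * (γ * z) = -z := by field_simp
      nlinarith [mul_le_mul_of_nonneg_left hstep hp.le, h5]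
    · rw [max_eq_left hγ'.le, gevU_rpow hγ h]
      have h6 : (1 + γ * z)⁻¹ * (-γ⁻¹ * Real.log (1 + γ * z)) * (1 + γ * z)
          = -γ⁻¹ * Real.log (1 + γ * z) := by
        field_simp
      rw [h6]
      have hp : (0:ℝ) < γ⁻¹ := inv_pos.mpr hγ'
      have h8 : γ⁻¹ * (γ * z) = z := by field_simp
      nlinarith [mul_le_mul_of_nonneg_left hlog hp.le, h8]

/-- **Bound on the σ-score of the GEV log-density**: for `σ > 0` and `1 + γz > 0`, where
`z = (x − μ)/σ` and `u = u_γ(z)`, one has `|∂_σ ℓ_θ(x)| ≤ (z + 1)/(σ(1 + γz))` if `z ≥ 0`,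
and `|∂_σ ℓ_θ(x)| ≤ σ⁻¹ (1 + u log u) u^(max(γ,0))` if `z ≤ 0`. -/
theorem gevScoreSigma_bound (γ μ σ : ℝ) (hσ : 0 < σ) (x : ℝ)
    (h : 0 < 1 + γ * ((x - μ) / σ)) :
    (0 ≤ (x - μ) / σ →
      |gevScoreSigma γ μ σ x| ≤ ((x - μ) / σ + 1) / (σ * (1 + γ * ((x - μ) / σ)))) ∧
    ((x - μ) / σ ≤ 0 →
      |gevScoreSigma γ μ σ x| ≤
        σ⁻¹ * (1 + gevU γ ((x - μ) / σ) * Real.log (gevU γ ((x - μ) / σ))) *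
          gevU γ ((x - μ) / σ) ^ (max γ 0)) := by
  set z := (x - μ) / σ with hzdef
  set u := gevU γ z with hudef
  set b := 1 + γ * z with hbdef
  have hu0 : 0 < u := gevU_pos h
  have hsb : 0 < σ * b := by positivity
  have habs : |gevScoreSigma γ μ σ x| = |(1 - u) * z - 1| / (σ * b) := by
    rw [gevScoreSigma, abs_div, abs_of_pos hsb]
  constructor
  · intro hz
    have hu1 : u ≤ 1 := gevU_le_one h hz
    have hnum : |(1 - u) * z - 1| ≤ z + 1 := by
      rw [abs_le]
      constructor <;> nlinarith
    rw [habs]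
    gcongr
  · intro hz
    have hu1 : 1 ≤ u := one_le_gevU h hz
    have hnum : |(1 - u) * z - 1| ≤ u * (-z) + 1 := by
      rw [abs_le]
      constructor <;> nlinarith
    have hkey : -z / b ≤ u ^ (max γ 0) * Real.log u := gev_key h hz
    have hinv : b⁻¹ ≤ u ^ (max γ 0) := gev_inv_le h hz
    have step1 : |gevScoreSigma γ μ σ x| ≤ (u * (-z) + 1) / (σ * b) := by
      rw [habs]; gcongr
    refine step1.trans ?_
    have heq : (u * (-z) + 1) / (σ * b) = σ⁻¹ * (u * (-z / b) + b⁻¹) := by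
      field_simp
    rw [heq]
    have h2 : u * (-z / b) + b⁻¹ ≤ u * (u ^ (max γ 0) * Real.log u) + u ^ (max γ 0) := by
      gcongr
    calc σ⁻¹ * (u * (-z / b) + b⁻¹)
        ≤ σ⁻¹ * (u * (u ^ (max γ 0) * Real.log u) + u ^ (max γ 0)) := by
          exact mul_le_mul_of_nonneg_left h2 (by positivity)
      _ = σ⁻¹ * (1 + u * Real.log u) * u ^ (max γ 0) := by ring
end

section
/- Fix θ₀ = (γ₀, μ₀, σ₀) ∈ (−1/2, ∞) × ℝ × (0, ∞) and define m_θ(x) = 2 log((p_θ(x) + p_{θ₀}(x))/(2 p_{θ₀}(x))) for x with p_{θ₀}(x) > 0, where p_θ is the GEV density. Then the map θ ↦ ∫ m_θ dP_{θ₀} attains a unique maximum over (−1/2, ∞) × ℝ × (0, ∞) at θ = θ₀; that is, ∫ m_θ dP_{θ₀} < ∫ m_{θ₀} dP_{θ₀} = 0 for every θ ∈ (−1/2, ∞) × ℝ × (0, ∞) with θ ≠ θ₀. -/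
open MeasureTheory Filter Set

/-- Lebesgue density of the GEV distribution with parameter `θ = (γ, μ, σ)`. -/
noncomputable def gevDensity (θ : ℝ × ℝ × ℝ) (x : ℝ) : ℝ :=
  if 0 < θ.2.2 + θ.1 * (x - θ.2.1) then
    (θ.2.2)⁻¹ * Real.exp (-(gevU θ.1 ((x - θ.2.1) / θ.2.2))) *
      gevU θ.1 ((x - θ.2.1) / θ.2.2) ^ (θ.1 + 1)
  else 0

/-- The GEV probability measure with parameter `θ`. -/
noncomputable def gevMeasure (θ : ℝ × ℝ × ℝ) : Measure ℝ :=
  MeasureTheory.volume.withDensity fun x => ENNReal.ofReal (gevDensity θ x)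

/-- The modified criterion function `m_θ = 2 log((p_θ + p_{θ₀})/(2 p_{θ₀}))`
relative to the reference parameter `θ₀` (meaningful where `p_{θ₀} > 0`). -/
noncomputable def gevM (θ₀ θ : ℝ × ℝ × ℝ) (x : ℝ) : ℝ :=
  2 * Real.log ((gevDensity θ x + gevDensity θ₀ x) / (2 * gevDensity θ₀ x))

/-!
Write `p = p_{θ₀}` and `q = p_θ`. From `log y ≤ y - 1`, pointwise
`p log ((q + p) / (2p)) ≤ (q - p) / 2`, strictly where `q ≠ p`; as `p` and `q` both
integrate to `1`, `∫ m_θ dP_{θ₀} ≥ 0` forces `q = p` almost everywhere, i.e. `P_θ = P_{θ₀}`.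
Averaging `q` with `p` keeps the logarithm above `-log 2`, which makes everything integrable.

The GEV family is identifiable: `P_θ(-∞, x] = exp (-t_θ(x))`, so equal laws give
`t_θ = t_{θ₀}` on the intersection of the supports, an open set of full measure. There the
derivatives `-σ⁻¹ t^(γ+1)` agree as well, which determines `γ` and `σ`, and then `μ`.
-/

namespace Real

lemma mul_log_mixture_lt {a b : ℝ} (ha : 0 ≤ a) (hb : 0 ≤ b) (hab : b ≠ a) :
    a * log ((b + a) / (2 * a)) < (b - a) / 2 := by
  rcases ha.eq_or_lt with rfl | ha
  · simpa using hb.lt_of_ne hab.symm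
  have hy : (b + a) / (2 * a) ≠ 1 := by
    rw [ne_eq, div_eq_one_iff_eq (by positivity)]
    contrapose! hab
    linarith
  calc a * log ((b + a) / (2 * a)) < a * ((b + a) / (2 * a) - 1) :=
        mul_lt_mul_of_pos_left (log_lt_sub_one_of_pos (by positivity) hy) ha
    _ = (b - a) / 2 := by field_simp; ring

lemma mul_log_mixture_le {a b : ℝ} (ha : 0 ≤ a) (hb : 0 ≤ b) :
    a * log ((b + a) / (2 * a)) ≤ (b - a) / 2 := by
  rcases eq_or_ne b a with rfl | hab
  · rcases ha.eq_or_lt with rfl | ha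
    · simp
    · simp [show (b + b) / (2 * b) = 1 by field_simp; ring]
  · exact (mul_log_mixture_lt ha hb hab).le

lemma abs_mul_log_mixture_le {a b : ℝ} (ha : 0 ≤ a) (hb : 0 ≤ b) :
    |a * log ((b + a) / (2 * a))| ≤ (b + a) / 2 + log 2 * a := by
  have hlog2 : 0 ≤ log 2 := log_nonneg one_le_two
  rcases ha.eq_or_lt with rfl | ha
  · simp
    positivity
  have hlow : -log 2 ≤ log ((b + a) / (2 * a)) := by
    rw [← log_inv, ← one_div]
    refine log_le_log (by norm_num) ?_
    rw [div_le_div_iff₀ (by norm_num) (by positivity)]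
    linarith
  rw [abs_le]
  constructor <;> nlinarith [mul_log_mixture_le ha.le hb]

end Real

open Real Topology

theorem ae_eq_of_integral_log_mixture_nonneg {α : Type*} [MeasurableSpace α] {μ : Measure α}
    {p q : α → ℝ} (hp : ∀ x, 0 ≤ p x) (hq : ∀ x, 0 ≤ q x) (hpi : Integrable p μ)
    (hqi : Integrable q μ) (hpq : ∫ x, q x ∂μ ≤ ∫ x, p x ∂μ)
    (h : 0 ≤ ∫ x, log ((q x + p x) / (2 * p x)) ∂μ.withDensity fun x => ENNReal.ofReal (p x)) :
    q =ᵐ[μ] p := by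
  set g : α → ℝ := fun x => p x * log ((q x + p x) / (2 * p x))
  have hg : ∫ x, log ((q x + p x) / (2 * p x)) ∂μ.withDensity (fun x => ENNReal.ofReal (p x))
      = ∫ x, g x ∂μ := by
    rw [integral_withDensity_eq_integral_toReal_smul₀ hpi.aemeasurable.ennreal_ofReal
      (ae_of_all _ fun _ => ENNReal.ofReal_lt_top)]
    simp only [ENNReal.toReal_ofReal (hp _), smul_eq_mul, g]
  have hgi : Integrable g μ := by
    refine Integrable.mono' (((hqi.add hpi).div_const 2).add (hpi.const_mul (log 2))) ?_
      (ae_of_all _ fun x => (norm_eq_abs _).trans_le (abs_mul_log_mixture_le (hp x) (hq x)))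
    have hlog : AEMeasurable (fun x => log ((q x + p x) / (2 * p x))) μ :=
      measurable_log.comp_aemeasurable <|
        (hqi.aemeasurable.add hpi.aemeasurable).div (hpi.aemeasurable.const_mul 2)
    exact hpi.aestronglyMeasurable.mul hlog.aestronglyMeasurable
  set d : α → ℝ := fun x => (q x - p x) / 2 - g x
  have hd_nonneg : 0 ≤ d := fun x => sub_nonneg.2 (mul_log_mixture_le (hp x) (hq x))
  have hqpi : Integrable (fun x => (q x - p x) / 2) μ := (hqi.sub hpi).div_const 2
  have hdi : Integrable d μ := hqpi.sub hgi
  have hd_zero : ∫ x, d x ∂μ = 0 := by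
    refine le_antisymm ?_ (integral_nonneg hd_nonneg)
    rw [integral_sub hqpi hgi, integral_div, integral_sub hqi hpi]
    linarith
  filter_upwards [(integral_eq_zero_iff_of_nonneg hd_nonneg hdi).1 hd_zero] with x hx
  by_contra hne
  exact (sub_pos.2 (mul_log_mixture_lt (hp x) (hq x) hne)).ne' hx

lemma lintegral_ofReal_exp_neg_Ioi (c : ℝ) :
    ∫⁻ t in Ioi c, ENNReal.ofReal (exp (-t)) = ENNReal.ofReal (exp (-c)) := by
  rw [← ofReal_integral_eq_lintegral_ofReal
    (by simpa [IntegrableOn] using exp_neg_integrableOn_Ioi c one_pos)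
    (ae_of_all _ fun t => (exp_pos _).le), integral_exp_neg_Ioi]

lemma hasDerivAt_gevU {γ z : ℝ} (hz : 0 < 1 + γ * z) :
    HasDerivAt (gevU γ) (-(gevU γ z ^ (γ + 1))) z := by
  rcases eq_or_ne γ 0 with rfl | hγ
  · have h : gevU 0 = fun z => exp (-z) := funext fun _ => if_pos rfl
    simpa [h] using (hasDerivAt_neg z).exp
  · have h : gevU γ = fun z => (1 + γ * z) ^ (-γ⁻¹) := funext fun _ => if_neg hγ
    have hd := (((hasDerivAt_id' z).const_mul γ).const_add 1).rpow_const (p := -γ⁻¹)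
      (Or.inl hz.ne')
    rw [h]
    refine hd.congr_deriv ?_
    rw [← rpow_mul hz.le, show -γ⁻¹ * (γ + 1) = -γ⁻¹ - 1 by field_simp; ring]
    field_simp

lemma measurable_gevU (γ : ℝ) : Measurable (gevU γ) := by
  unfold gevU
  split_ifs <;> fun_prop

lemma gevU_injOn (γ : ℝ) : InjOn (gevU γ) {z | 0 < 1 + γ * z} := by
  intro z hz w hw h
  unfold gevU at h
  split_ifs at h with hγ
  · simpa using h
  · exact mul_left_cancel₀ hγ <| add_left_cancel <|
      (rpow_left_inj hz.le hw.le (neg_ne_zero.2 (inv_ne_zero hγ))).1 h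

-- `t(x)` in the usual notation `F_θ(x) = exp (-t(x))` for the GEV distribution function.
noncomputable def gevT (θ : ℝ × ℝ × ℝ) (x : ℝ) : ℝ := gevU θ.1 ((x - θ.2.1) / θ.2.2)

def gevSupport (θ : ℝ × ℝ × ℝ) : Set ℝ := {x | 0 < θ.2.2 + θ.1 * (x - θ.2.1)}

section

variable {θ : ℝ × ℝ × ℝ} {x : ℝ}

lemma isOpen_gevSupport : IsOpen (gevSupport θ) :=
  isOpen_lt continuous_const (by fun_prop)

lemma convex_gevSupport : Convex ℝ (gevSupport θ) := by
  intro x hx y hy a b ha hb hab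
  simp only [gevSupport, mem_ofPred_eq, smul_eq_mul] at *
  have : θ.2.2 + θ.1 * (a * x + b * y - θ.2.1) =
      a * (θ.2.2 + θ.1 * (x - θ.2.1)) + b * (θ.2.2 + θ.1 * (y - θ.2.1)) := by
    linear_combination (θ.2.2 - θ.1 * θ.2.1) * hab.symm
  rw [this]
  rcases ha.eq_or_lt with rfl | ha
  · simp_all
  · positivity

lemma mem_gevSupport_iff (hσ : 0 < θ.2.2) :
    x ∈ gevSupport θ ↔ 0 < 1 + θ.1 * ((x - θ.2.1) / θ.2.2) := by
  rw [show 1 + θ.1 * ((x - θ.2.1) / θ.2.2) = (θ.2.2 + θ.1 * (x - θ.2.1)) / θ.2.2 by field_simp,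
    div_pos_iff_of_pos_right hσ]
  exact Iff.rfl

lemma gevT_pos (hσ : 0 < θ.2.2) (hx : x ∈ gevSupport θ) : 0 < gevT θ x := by
  unfold gevT gevU
  split_ifs
  · exact exp_pos _
  · exact rpow_pos_of_pos ((mem_gevSupport_iff hσ).1 hx) _

lemma gevDensity_of_mem (hx : x ∈ gevSupport θ) :
    gevDensity θ x = θ.2.2⁻¹ * exp (-gevT θ x) * gevT θ x ^ (θ.1 + 1) :=
  if_pos hx

lemma gevDensity_of_notMem (hx : x ∉ gevSupport θ) : gevDensity θ x = 0 :=
  if_neg hx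

lemma gevDensity_nonneg (hσ : 0 < θ.2.2) (x : ℝ) : 0 ≤ gevDensity θ x := by
  by_cases hx : x ∈ gevSupport θ
  · have := gevT_pos hσ hx
    rw [gevDensity_of_mem hx]
    positivity
  · exact (gevDensity_of_notMem hx).ge

lemma measurable_gevDensity : Measurable (gevDensity θ) := by
  have := measurable_gevU θ.1
  exact Measurable.ite (measurableSet_lt measurable_const (by fun_prop)) (by fun_prop)
    measurable_const

lemma hasDerivAt_gevT (hσ : 0 < θ.2.2) (hx : x ∈ gevSupport θ) :
    HasDerivAt (gevT θ) (-(θ.2.2⁻¹ * gevT θ x ^ (θ.1 + 1))) x := by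
  have := (hasDerivAt_gevU ((mem_gevSupport_iff hσ).1 hx)).comp x
    (((hasDerivAt_id' x).sub_const θ.2.1).div_const θ.2.2)
  refine this.congr_deriv ?_
  simp only [gevT]
  ring

lemma strictAntiOn_gevT (hσ : 0 < θ.2.2) : StrictAntiOn (gevT θ) (gevSupport θ) := by
  refine strictAntiOn_of_deriv_neg convex_gevSupport
    (fun y hy => (hasDerivAt_gevT hσ hy).continuousAt.continuousWithinAt) fun y hy => ?_
  rw [isOpen_gevSupport.interior_eq] at hy
  have := gevT_pos hσ hy
  rw [(hasDerivAt_gevT hσ hy).deriv, neg_neg_iff_pos]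
  positivity

lemma exists_mem_gevSupport_gevT_eq (hσ : 0 < θ.2.2) {t : ℝ} (ht : 0 < t) :
    ∃ y ∈ gevSupport θ, gevT θ y = t := by
  rcases eq_or_ne θ.1 0 with hγ | hγ
  · refine ⟨θ.2.1 - θ.2.2 * log t, by simp [gevSupport, hγ, hσ], ?_⟩
    rw [gevT, gevU, if_pos hγ, show (θ.2.1 - θ.2.2 * log t - θ.2.1) / θ.2.2 = -log t by
      field_simp; ring, neg_neg, exp_log ht]
  · have hb : 1 + θ.1 * ((θ.2.1 + θ.2.2 * ((t ^ (-θ.1) - 1) / θ.1) - θ.2.1) / θ.2.2) =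
        t ^ (-θ.1) := by
      field_simp
      ring
    refine ⟨θ.2.1 + θ.2.2 * ((t ^ (-θ.1) - 1) / θ.1), ?_, ?_⟩
    · rw [mem_gevSupport_iff hσ, hb]
      positivity
    · rw [gevT, gevU, if_neg hγ, hb, ← rpow_mul ht.le, neg_mul_neg, mul_inv_cancel₀ hγ,
        rpow_one]

lemma gevT_image_gevSupport (hσ : 0 < θ.2.2) : gevT θ '' gevSupport θ = Ioi 0 := by
  refine Subset.antisymm (image_subset_iff.2 fun y hy => gevT_pos hσ hy) fun t ht => ?_
  obtain ⟨y, hy, rfl⟩ := exists_mem_gevSupport_gevT_eq hσ ht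
  exact mem_image_of_mem _ hy

lemma gevT_image_gevSupport_inter_Iic (hσ : 0 < θ.2.2) (hx : x ∈ gevSupport θ) :
    gevT θ '' (gevSupport θ ∩ Iic x) = Ici (gevT θ x) := by
  refine Subset.antisymm (image_subset_iff.2 fun y ⟨hy, hyx⟩ =>
    (strictAntiOn_gevT hσ).antitoneOn hy hx hyx) fun t ht => ?_
  obtain ⟨y, hy, rfl⟩ := exists_mem_gevSupport_gevT_eq hσ ((gevT_pos hσ hx).trans_le ht)
  exact mem_image_of_mem _ ⟨hy, ((strictAntiOn_gevT hσ).le_iff_ge hx hy).1 ht⟩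

lemma gevMeasure_compl_gevSupport : gevMeasure θ (gevSupport θ)ᶜ = 0 := by
  rw [gevMeasure, withDensity_apply _ isOpen_gevSupport.measurableSet.compl]
  refine (setLIntegral_congr_fun isOpen_gevSupport.measurableSet.compl fun y hy => ?_).trans
    lintegral_zero
  rw [gevDensity_of_notMem hy, ENNReal.ofReal_zero]

lemma gevMeasure_of_subset_gevSupport (hσ : 0 < θ.2.2) {s : Set ℝ} (hs : MeasurableSet s)
    (hsS : s ⊆ gevSupport θ) :
    gevMeasure θ s = ∫⁻ t in gevT θ '' s, ENNReal.ofReal (exp (-t)) := by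
  rw [lintegral_image_eq_lintegral_abs_deriv_mul hs
    (fun y hy => (hasDerivAt_gevT hσ (hsS hy)).hasDerivWithinAt)
    ((strictAntiOn_gevT hσ).injOn.mono hsS), gevMeasure, withDensity_apply _ hs]
  refine setLIntegral_congr_fun hs fun y hy => ?_
  have := gevT_pos hσ (hsS hy)
  rw [gevDensity_of_mem (hsS hy), abs_neg, abs_of_pos (by positivity),
    ← ENNReal.ofReal_mul (by positivity)]
  ring_nf

lemma gevMeasure_Iic (hσ : 0 < θ.2.2) (hx : x ∈ gevSupport θ) :
    gevMeasure θ (Iic x) = ENNReal.ofReal (exp (-gevT θ x)) := by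
  rw [← measure_inter_conull gevMeasure_compl_gevSupport, inter_comm,
    gevMeasure_of_subset_gevSupport hσ (isOpen_gevSupport.measurableSet.inter measurableSet_Iic)
      inter_subset_left, gevT_image_gevSupport_inter_Iic hσ hx,
    setLIntegral_congr Ioi_ae_eq_Ici.symm, lintegral_ofReal_exp_neg_Ioi]

lemma isProbabilityMeasure_gevMeasure (hσ : 0 < θ.2.2) :
    IsProbabilityMeasure (gevMeasure θ) := by
  constructor
  rw [← measure_inter_conull gevMeasure_compl_gevSupport, univ_inter,
    gevMeasure_of_subset_gevSupport hσ isOpen_gevSupport.measurableSet subset_rfl,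
    gevT_image_gevSupport hσ, lintegral_ofReal_exp_neg_Ioi, neg_zero, exp_zero,
    ENNReal.ofReal_one]

lemma lintegral_gevDensity (hσ : 0 < θ.2.2) : ∫⁻ x, ENNReal.ofReal (gevDensity θ x) = 1 := by
  have := (isProbabilityMeasure_gevMeasure hσ).measure_univ
  rwa [gevMeasure, withDensity_apply _ MeasurableSet.univ, Measure.restrict_univ] at this

lemma integrable_gevDensity (hσ : 0 < θ.2.2) : Integrable (gevDensity θ) :=
  ⟨measurable_gevDensity.aestronglyMeasurable,
    (hasFiniteIntegral_iff_ofReal (ae_of_all _ (gevDensity_nonneg hσ))).2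
      (by rw [lintegral_gevDensity hσ]; exact ENNReal.one_lt_top)⟩

lemma integral_gevDensity (hσ : 0 < θ.2.2) : ∫ x, gevDensity θ x = 1 := by
  rw [integral_eq_lintegral_of_nonneg_ae (ae_of_all _ (gevDensity_nonneg hσ))
    measurable_gevDensity.aestronglyMeasurable, lintegral_gevDensity hσ, ENNReal.toReal_one]

lemma ae_mem_gevSupport : ∀ᵐ x ∂gevMeasure θ, x ∈ gevSupport θ :=
  ae_iff.2 gevMeasure_compl_gevSupport

end

/- Comparing the derivatives `-σ⁻¹ t^(γ+1)` of `t = gevT θ = gevT θ'` in logarithmic form at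
two points with different values of `t` separates `γ` from `σ`; injectivity of `gevU γ` then
gives `μ`. -/
theorem eq_of_eqOn_gevT {θ θ' : ℝ × ℝ × ℝ} (hσ : 0 < θ.2.2) (hσ' : 0 < θ'.2.2) {T : Set ℝ}
    (hT : IsOpen T) (hTS : T ⊆ gevSupport θ ∩ gevSupport θ') (hne : T.Nonempty)
    (h : EqOn (gevT θ) (gevT θ') T) : θ = θ' := by
  have hderiv : ∀ x ∈ T, -log θ.2.2 + (θ.1 + 1) * log (gevT θ x) =
      -log θ'.2.2 + (θ'.1 + 1) * log (gevT θ x) := by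
    intro x hx
    have heq : gevT θ =ᶠ[𝓝 x] gevT θ' :=
      Filter.mem_of_superset (hT.mem_nhds hx) fun _ hy => h hy
    have hd := neg_inj.1 <| (hasDerivAt_gevT hσ (hTS hx).1).unique
      ((hasDerivAt_gevT hσ' (hTS hx).2).congr_of_eventuallyEq heq)
    have ht := gevT_pos hσ (hTS hx).1
    rw [← h hx] at hd
    have hlog := congrArg log hd
    rwa [log_mul (by positivity) (by positivity), log_mul (by positivity) (by positivity),
      log_inv, log_inv, log_rpow ht, log_rpow ht] at hlog
  obtain ⟨x₀, hx₀⟩ := hne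
  obtain ⟨l, u, ⟨hlx₀, hx₀u⟩, hlu⟩ := mem_nhds_iff_exists_Ioo_subset.1 (hT.mem_nhds hx₀)
  have hx₁ : (x₀ + u) / 2 ∈ T := hlu ⟨by linarith, by linarith⟩
  have hlog : log (gevT θ ((x₀ + u) / 2)) < log (gevT θ x₀) :=
    log_lt_log (gevT_pos hσ (hTS hx₁).1)
      (strictAntiOn_gevT hσ (hTS hx₀).1 (hTS hx₁).1 (by linarith))
  have hγ : θ.1 = θ'.1 := mul_left_cancel₀ (sub_ne_zero.2 hlog.ne') <| by
    linear_combination hderiv x₀ hx₀ - hderiv _ hx₁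
  have hσσ : θ.2.2 = θ'.2.2 := log_injOn_pos hσ hσ' <| by
    linear_combination log (gevT θ x₀) * hγ - hderiv x₀ hx₀
  have hz : 0 < 1 + θ'.1 * ((x₀ - θ.2.1) / θ'.2.2) := by
    simpa only [hγ, hσσ] using (mem_gevSupport_iff hσ).1 (hTS hx₀).1
  have hμ : θ.2.1 = θ'.2.1 := by
    have := gevU_injOn θ'.1 hz ((mem_gevSupport_iff hσ').1 (hTS hx₀).2)
      (by simpa only [gevT, hγ, hσσ] using h hx₀)
    rw [div_left_inj' hσ'.ne'] at this
    linarith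
  exact Prod.ext hγ (Prod.ext hμ hσσ)

theorem eq_of_gevMeasure_eq {θ θ' : ℝ × ℝ × ℝ} (hσ : 0 < θ.2.2) (hσ' : 0 < θ'.2.2)
    (h : gevMeasure θ = gevMeasure θ') : θ = θ' := by
  have := isProbabilityMeasure_gevMeasure hσ
  have hne : (gevSupport θ ∩ gevSupport θ').Nonempty :=
    (ae_mem_gevSupport.and (h ▸ ae_mem_gevSupport)).exists
  refine eq_of_eqOn_gevT hσ hσ' (isOpen_gevSupport.inter isOpen_gevSupport) subset_rfl hne
    fun x hx => ?_
  have := gevMeasure_Iic hσ hx.1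
  rwa [h, gevMeasure_Iic hσ' hx.2, ENNReal.ofReal_eq_ofReal_iff (exp_pos _).le (exp_pos _).le,
    exp_eq_exp, neg_inj, eq_comm] at this

theorem gev_m_unique_max_general (θ₀ : ℝ × ℝ × ℝ) (hσ : 0 < θ₀.2.2) :
    (∫ x, gevM θ₀ θ₀ x ∂(gevMeasure θ₀)) = 0 ∧
    ∀ θ : ℝ × ℝ × ℝ, -(1/2) < θ.1 → 0 < θ.2.2 → θ ≠ θ₀ →
      (∫ x, gevM θ₀ θ x ∂(gevMeasure θ₀)) < 0 := by
  refine ⟨?_, fun θ _ hσθ hne => lt_of_not_ge fun hle => hne ?_⟩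
  · have : gevM θ₀ θ₀ = 0 := funext fun x => by
      rcases eq_or_ne (gevDensity θ₀ x) 0 with h | h <;> simp [gevM, h, ← two_mul]
    simp [this]
  · simp only [gevM, integral_const_mul] at hle
    refine eq_of_gevMeasure_eq hσθ hσ (withDensity_congr_ae ?_)
    filter_upwards [ae_eq_of_integral_log_mixture_nonneg (gevDensity_nonneg hσ)
      (gevDensity_nonneg hσθ) (integrable_gevDensity hσ) (integrable_gevDensity hσθ)
      (by rw [integral_gevDensity hσ, integral_gevDensity hσθ])
      ((mul_nonneg_iff_of_pos_left two_pos).1 hle)] with x hx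
    rw [hx]

/-- **Unique maximizer of `θ ↦ P_{θ₀} m_θ`** over `(−1/2, ∞) × ℝ × (0, ∞)`:
the maximum value `0` is attained at `θ = θ₀` only; that is,
`∫ m_θ dP_{θ₀} < ∫ m_{θ₀} dP_{θ₀} = 0` for every admissible `θ ≠ θ₀`. -/
theorem gev_m_unique_max (θ₀ : ℝ × ℝ × ℝ) (hγ : -(1/2) < θ₀.1) (hσ : 0 < θ₀.2.2) :
    (∫ x, gevM θ₀ θ₀ x ∂(gevMeasure θ₀)) = 0 ∧
    ∀ θ : ℝ × ℝ × ℝ, -(1/2) < θ.1 → 0 < θ.2.2 → θ ≠ θ₀ →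
      (∫ x, gevM θ₀ θ x ∂(gevMeasure θ₀)) < 0 :=
  gev_m_unique_max_general θ₀ hσ
end

section
/- Let θ₀ = (γ₀, μ₀, σ₀) with −1/2 < γ₀ < 0 and σ₀ > 0, and let θₙ = (γₙ, μₙ, σₙ) → θ₀ with γₙ < 0 for all n, and uₙ ↓ 0. Let ωₙ = μₙ − σₙ/γₙ be the (finite) upper endpoint of the support of the GEV law P_{θₙ}. Then P_{θₙ}([ωₙ − uₙ, ωₙ)) = 1 − exp(−(|γₙ| uₙ / σₙ)^{1/|γₙ|}) ≤ (|γₙ| uₙ / σₙ)^{1/|γₙ|}, and consequently uₙ^{−2} P_{θₙ}([ωₙ − uₙ, ωₙ)) → 0 as n → ∞. -/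
/-!
For `γ < 0` the GEV density is the derivative of `G(x) = exp (-(1 + γ (x - μ) / σ) ^ (-1/γ))`
on the support, and `G` is continuous up to the endpoint `ω = μ - σ / γ` with `G ω = 1`. So the
mass of `[ω - u, ω)` is `1 - exp (-t)` with `t = (|γ| u / σ) ^ (1/|γ|)`, and `1 - exp (-t) ≤ t`.
Finally `t / u² = (|γ| / σ) ^ (1/|γ|) · u ^ (1/|γ| - 2)`, and `1/|γₙ| → 1/|γ₀| > 2`.
-/

open MeasureTheory Filter Set

open Topology ENNReal

theorem withDensity_ofReal_Ico_eq_sub {f F : ℝ → ℝ} {a b : ℝ} (hab : a ≤ b)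
    (hF : ContinuousOn F (Icc a b)) (hderiv : ∀ x ∈ Ioo a b, HasDerivAt F (f x) x)
    (hf : ∀ x ∈ Ioo a b, 0 ≤ f x) :
    volume.withDensity (fun x => ENNReal.ofReal (f x)) (Ico a b) = ENNReal.ofReal (F b - F a) := by
  have hint : IntegrableOn f (Ioc a b) := intervalIntegral.integrableOn_deriv_of_nonneg hF hderiv hf
  have hFTC : ∫ x in a..b, f x = F b - F a :=
    intervalIntegral.integral_eq_sub_of_hasDeriv_right_of_le hab hF
      (fun x hx => (hderiv x hx).hasDerivWithinAt)
      ((intervalIntegrable_iff_integrableOn_Ioc_of_le hab).mpr hint)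
  calc volume.withDensity (fun x => ENNReal.ofReal (f x)) (Ico a b)
      = ∫⁻ x in Ioo a b, ENNReal.ofReal (f x) := by
        rw [withDensity_apply _ measurableSet_Ico, Measure.restrict_congr_set Ioo_ae_eq_Ico.symm]
    _ = ENNReal.ofReal (∫ x in Ioo a b, f x) :=
        (ofReal_integral_eq_lintegral_ofReal (hint.mono_set Ioo_subset_Ioc_self)
          ((ae_restrict_iff' measurableSet_Ioo).mpr (ae_of_all _ hf))).symm
    _ = ENNReal.ofReal (F b - F a) := by
        rw [← integral_Ioc_eq_integral_Ioo, ← intervalIntegral.integral_of_le hab, hFTC]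

theorem tendsto_mul_rpow_div_pow_nhds_zero {α : Type*} {l : Filter α} {c q u : α → ℝ}
    {c₀ q₀ : ℝ} {k : ℕ} (hc : Tendsto c l (𝓝 c₀)) (hq : Tendsto q l (𝓝 q₀)) (hk : k < q₀)
    (hu : Tendsto u l (𝓝 0)) (hc_nonneg : ∀ x, 0 ≤ c x) (hu_pos : ∀ x, 0 < u x) :
    Tendsto (fun x => (c x * u x) ^ q x / u x ^ k) l (𝓝 0) := by
  have hq₀ : 0 < q₀ := lt_of_le_of_lt k.cast_nonneg hk
  have hsplit : ∀ x, (c x * u x) ^ q x / u x ^ k = c x ^ q x * u x ^ (q x - k) := fun x => by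
    rw [Real.mul_rpow (hc_nonneg x) (hu_pos x).le, Real.rpow_sub (hu_pos x), Real.rpow_natCast,
      mul_div_assoc]
  have hpow : Tendsto (fun x => u x ^ (q x - k)) l (𝓝 0) := by
    simpa [Real.zero_rpow (sub_pos.mpr hk).ne'] using
      hu.rpow (hq.sub_const (k : ℝ)) (Or.inr (sub_pos.mpr hk))
  simpa [hsplit] using (hc.rpow hq (Or.inr hq₀)).mul hpow

/-- The GEV distribution function on the support and at its endpoint; outside, `Real.rpow` of a
negative base makes it junk. -/
noncomputable def gevCdf (θ : ℝ × ℝ × ℝ) (x : ℝ) : ℝ :=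
  Real.exp (-gevU θ.1 ((x - θ.2.1) / θ.2.2))

section GEV

variable {γ μ σ : ℝ}

theorem gevU_of_ne_zero (hγ : γ ≠ 0) (z : ℝ) : gevU γ z = (1 + γ * z) ^ (-γ⁻¹) := if_neg hγ

theorem gevU_nonneg {z : ℝ} (hz : 0 ≤ 1 + γ * z) : 0 ≤ gevU γ z := by
  unfold gevU
  split_ifs
  exacts [(Real.exp_pos _).le, Real.rpow_nonneg hz _]

theorem gevDensity_nonneg_s18 (hσ : 0 < σ) (x : ℝ) : 0 ≤ gevDensity (γ, μ, σ) x := by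
  unfold gevDensity
  split_ifs with h
  · have hz : 0 ≤ 1 + γ * ((x - μ) / σ) := by
      rw [mul_div_assoc', one_add_div hσ.ne']
      exact (div_pos h hσ).le
    have := gevU_nonneg hz
    positivity
  · exact le_rfl

theorem hasDerivAt_gevCdf (hγ : γ ≠ 0) (hσ : 0 < σ) {x : ℝ} (hx : 0 < σ + γ * (x - μ)) :
    HasDerivAt (gevCdf (γ, μ, σ)) (gevDensity (γ, μ, σ) x) x := by
  set s : ℝ → ℝ := fun x => 1 + γ * ((x - μ) / σ)
  have hs : 0 < s x := by
    simp only [s]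
    rw [mul_div_assoc', one_add_div hσ.ne']
    exact div_pos hx hσ
  have hs' : HasDerivAt s (γ / σ) x :=
    (((((hasDerivAt_id' x).sub_const μ).div_const σ).const_mul γ).const_add 1).congr_deriv
      (by ring)
  have hcdf : gevCdf (γ, μ, σ) = fun x => Real.exp (-s x ^ (-γ⁻¹)) := by
    funext y; simp [gevCdf, gevU_of_ne_zero hγ, s]
  rw [hcdf]
  refine (hs'.rpow_const (p := -γ⁻¹) (Or.inl hs.ne')).neg.exp.congr_deriv ?_
  -- the density's exponent `-γ⁻¹ * (γ + 1)` is the derivative's `-γ⁻¹ - 1`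
  rw [gevDensity, if_pos hx, gevU_of_ne_zero hγ, show 1 + γ * ((x - μ) / σ) = s x from rfl,
    ← Real.rpow_mul hs.le,
    show -γ⁻¹ * (γ + 1) = -γ⁻¹ - 1 by field_simp; ring]
  clear_value s
  simp only [Pi.neg_apply]
  field_simp

theorem continuous_gevCdf (hγ : γ < 0) : Continuous (gevCdf (γ, μ, σ)) := by
  show Continuous fun x => Real.exp (-gevU γ ((x - μ) / σ))
  simp only [gevU_of_ne_zero hγ.ne]
  exact Real.continuous_exp.comp ((Continuous.rpow_const (by fun_prop)
    fun _ => Or.inr (neg_nonneg.mpr (inv_nonpos.mpr hγ.le))).neg)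

theorem gevCdf_endpoint_sub (hγ : γ < 0) (hσ : σ ≠ 0) (u : ℝ) :
    gevCdf (γ, μ, σ) (μ - σ / γ - u) = Real.exp (-(|γ| * u / σ) ^ |γ|⁻¹) := by
  rw [gevCdf, gevU_of_ne_zero hγ.ne, abs_of_neg hγ, inv_neg]
  congr 3
  field_simp [hγ.ne]
  ring

theorem gevCdf_endpoint (hγ : γ < 0) (hσ : σ ≠ 0) : gevCdf (γ, μ, σ) (μ - σ / γ) = 1 := by
  simpa [Real.zero_rpow (inv_pos.mpr (abs_pos.mpr hγ.ne)).ne'] using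
    gevCdf_endpoint_sub (μ := μ) hγ hσ 0

theorem gevMeasure_Ico (hγ : γ < 0) (hσ : 0 < σ) {a b : ℝ} (hab : a ≤ b) (hb : b ≤ μ - σ / γ) :
    gevMeasure (γ, μ, σ) (Ico a b) =
      ENNReal.ofReal (gevCdf (γ, μ, σ) b - gevCdf (γ, μ, σ) a) := by
  refine withDensity_ofReal_Ico_eq_sub hab (continuous_gevCdf hγ).continuousOn
    (fun x hx => hasDerivAt_gevCdf hγ.ne hσ ?_) (fun x _ => gevDensity_nonneg_s18 hσ x)
  have hω : σ + γ * (x - μ) = γ * (x - (μ - σ / γ)) := by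
    field_simp [hγ.ne]; ring
  rw [hω]
  exact mul_pos_of_neg_of_neg hγ (by linarith [hx.2])

theorem gevMeasure_Ico_endpoint (hγ : γ < 0) (hσ : 0 < σ) {u : ℝ} (hu : 0 ≤ u) :
    gevMeasure (γ, μ, σ) (Ico (μ - σ / γ - u) (μ - σ / γ)) =
      ENNReal.ofReal (1 - Real.exp (-(|γ| * u / σ) ^ |γ|⁻¹)) := by
  rw [gevMeasure_Ico hγ hσ (by linarith) le_rfl, gevCdf_endpoint hγ hσ.ne',
    gevCdf_endpoint_sub hγ hσ.ne']

end GEV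

theorem gev_endpoint_mass_general (γ₀ μ₀ σ₀ : ℝ) (hγ₀ : -(1/2) < γ₀) (hγ₀' : γ₀ < 0) (hσ₀ : 0 < σ₀)
    (θseq : ℕ → ℝ × ℝ × ℝ)
    (hθlim : Filter.Tendsto θseq Filter.atTop (nhds (γ₀, μ₀, σ₀)))
    (hγn : ∀ n, (θseq n).1 < 0) (hσn : ∀ n, 0 < (θseq n).2.2)
    (u : ℕ → ℝ) (hu_pos : ∀ n, 0 < u n)
    (hu_lim : Filter.Tendsto u Filter.atTop (nhds 0)) :
    (∀ n : ℕ,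
      gevMeasure (θseq n)
          (Set.Ico ((θseq n).2.1 - (θseq n).2.2 / (θseq n).1 - u n)
            ((θseq n).2.1 - (θseq n).2.2 / (θseq n).1))
        = ENNReal.ofReal
            (1 - Real.exp (-((|(θseq n).1| * u n / (θseq n).2.2) ^ (|(θseq n).1|⁻¹)))) ∧
      gevMeasure (θseq n)
          (Set.Ico ((θseq n).2.1 - (θseq n).2.2 / (θseq n).1 - u n)
            ((θseq n).2.1 - (θseq n).2.2 / (θseq n).1))
        ≤ ENNReal.ofReal ((|(θseq n).1| * u n / (θseq n).2.2) ^ (|(θseq n).1|⁻¹))) ∧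
    Filter.Tendsto
      (fun n : ℕ =>
        (gevMeasure (θseq n)
            (Set.Ico ((θseq n).2.1 - (θseq n).2.2 / (θseq n).1 - u n)
              ((θseq n).2.1 - (θseq n).2.2 / (θseq n).1))).toReal / (u n) ^ 2)
      Filter.atTop (nhds 0) := by
  set t : ℕ → ℝ := fun n => (|(θseq n).1| * u n / (θseq n).2.2) ^ (|(θseq n).1|⁻¹)
  set mass : ℕ → ℝ≥0∞ := fun n => gevMeasure (θseq n)
    (Ico ((θseq n).2.1 - (θseq n).2.2 / (θseq n).1 - u n)
      ((θseq n).2.1 - (θseq n).2.2 / (θseq n).1))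
  have hmass n : mass n = ENNReal.ofReal (1 - Real.exp (-t n)) :=
    gevMeasure_Ico_endpoint (hγn n) (hσn n) (hu_pos n).le
  have hbound n : mass n ≤ ENNReal.ofReal (t n) := by
    rw [hmass n]
    exact ENNReal.ofReal_le_ofReal (by linarith [Real.add_one_le_exp (-t n)])
  refine ⟨fun n => ⟨hmass n, hbound n⟩, ?_⟩
  have hγlim : Tendsto (fun n => |(θseq n).1|) atTop (𝓝 |γ₀|) :=
    ((continuous_fst.tendsto _).comp hθlim).abs
  have hσlim : Tendsto (fun n => (θseq n).2.2) atTop (𝓝 σ₀) :=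
    ((continuous_snd.comp continuous_snd).tendsto _).comp hθlim
  have hγ₀_abs : 0 < |γ₀| := abs_pos.mpr hγ₀'.ne
  have htwo : ((2 : ℕ) : ℝ) < |γ₀|⁻¹ := by
    rw [Nat.cast_two, lt_inv_comm₀ two_pos hγ₀_abs, abs_of_neg hγ₀']
    linarith
  have ht : Tendsto (fun n => t n / u n ^ 2) atTop (𝓝 0) := by
    simp only [t, mul_div_right_comm _ (u _)]
    exact tendsto_mul_rpow_div_pow_nhds_zero (hγlim.div hσlim hσ₀.ne') (hγlim.inv₀ hγ₀_abs.ne')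
      htwo hu_lim (fun n => div_nonneg (abs_nonneg _) (hσn n).le) hu_pos
  refine squeeze_zero (fun n => by positivity) (fun n => ?_) ht
  gcongr
  exact ENNReal.toReal_le_of_le_ofReal
    (Real.rpow_nonneg (div_nonneg (mul_nonneg (abs_nonneg _) (hu_pos n).le) (hσn n).le) _)
    (hbound n)

/-- For `−1/2 < γ₀ < 0`, parameters `θₙ = (γₙ, μₙ, σₙ) → θ₀` with `γₙ < 0`, `σₙ > 0`, and
`uₙ ↓ 0`, the GEV mass of the interval `[ωₙ − uₙ, ωₙ)` below the upper endpoint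
`ωₙ = μₙ − σₙ/γₙ` of the support equals `1 − exp(−(|γₙ| uₙ/σₙ)^{1/|γₙ|})`, is bounded by
`(|γₙ| uₙ/σₙ)^{1/|γₙ|}`, and is `o(uₙ²)` as `n → ∞`. -/
theorem gev_endpoint_mass (γ₀ μ₀ σ₀ : ℝ) (hγ₀ : -(1/2) < γ₀) (hγ₀' : γ₀ < 0) (hσ₀ : 0 < σ₀)
    (θseq : ℕ → ℝ × ℝ × ℝ)
    (hθlim : Filter.Tendsto θseq Filter.atTop (nhds (γ₀, μ₀, σ₀)))
    (hγn : ∀ n, (θseq n).1 < 0) (hσn : ∀ n, 0 < (θseq n).2.2)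
    (u : ℕ → ℝ) (hu_pos : ∀ n, 0 < u n) (hu_anti : Antitone u)
    (hu_lim : Filter.Tendsto u Filter.atTop (nhds 0)) :
    (∀ n : ℕ,
      gevMeasure (θseq n)
          (Set.Ico ((θseq n).2.1 - (θseq n).2.2 / (θseq n).1 - u n)
            ((θseq n).2.1 - (θseq n).2.2 / (θseq n).1))
        = ENNReal.ofReal
            (1 - Real.exp (-((|(θseq n).1| * u n / (θseq n).2.2) ^ (|(θseq n).1|⁻¹)))) ∧
      gevMeasure (θseq n)
          (Set.Ico ((θseq n).2.1 - (θseq n).2.2 / (θseq n).1 - u n)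
            ((θseq n).2.1 - (θseq n).2.2 / (θseq n).1))
        ≤ ENNReal.ofReal ((|(θseq n).1| * u n / (θseq n).2.2) ^ (|(θseq n).1|⁻¹))) ∧
    Filter.Tendsto
      (fun n : ℕ =>
        (gevMeasure (θseq n)
            (Set.Ico ((θseq n).2.1 - (θseq n).2.2 / (θseq n).1 - u n)
              ((θseq n).2.1 - (θseq n).2.2 / (θseq n).1))).toReal / (u n) ^ 2)
      Filter.atTop (nhds 0) :=
  gev_endpoint_mass_general γ₀ μ₀ σ₀ hγ₀ hγ₀' hσ₀ θseq hθlim hγn hσn u hu_pos hu_lim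
end
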